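/- Let C_• ⊆ dg(Δⁿ)_• be the subcomplex generated by all injective necklace maps g: U ↪ Δⁿ other than id_{Δⁿ} and δ_j (for a fixed 0 < j < n). Then the quotient complex dg(Δⁿ)_•/C_• is isomorphic to the complex with k in degrees n−1 and n−2 and the identity as the only nonzero differential; in particular it is acyclic and degreewise free, so the inclusion C_• ↪ dg(Δⁿ)_• is a split monomorphism of chain complexes. -/

import Mathlib

def IsNeck (p : ℕ) (T : Finset ℕ) : Prop :=
  T ⊆ Finset.range (p + 1) ∧ 0 ∈ T ∧ p ∈ T

/-- An injective necklace map `g : (U,q) ↪ (T,p)` of dimension `n`, encoded by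
its image data: `V = g([q])` is the image of the vertices and `W = g(U)` the
image of the joints; then `T ⊆ W ⊆ V ⊆ [p]`, `0, p ∈ W`, and
`dim U = |V \ W| = n`.  (The strictly monotone endpoint-preserving map `g` is
recovered as the unique order isomorphism `[q] ≅ V`, and `U = g⁻¹(W)`.) -/
structure Idx (p : ℕ) (T : Finset ℕ) (n : ℕ) : Type where
  V : Finset ℕ
  W : Finset ℕ
  hTW : T ⊆ W
  hWV : W ⊆ V
  hV : V ⊆ Finset.range (p + 1)
  h0 : 0 ∈ W
  hp : p ∈ W
  hdim : (V \ W).card = n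

namespace Idx

variable {p : ℕ} {T : Finset ℕ} {n : ℕ}

/-- The face `g ∘ δ_{i_j}` of an injective necklace map, removing the vertex
`i ∈ V \ W`. -/
def face (x : Idx p T (n + 1)) (i : ℕ) (hi : i ∈ x.V \ x.W) : Idx p T n where
  V := x.V.erase i
  W := x.W
  hTW := x.hTW
  hWV := Finset.subset_erase.mpr ⟨x.hWV, (Finset.mem_sdiff.mp hi).2⟩
  hV := fun a ha => x.hV (Finset.mem_of_mem_erase ha)
  h0 := x.h0
  hp := x.hp
  hdim := by
    have h1 : x.V.erase i \ x.W = (x.V \ x.W).erase i := by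
      ext a
      simp only [Finset.mem_erase, Finset.mem_sdiff]
      tauto
    rw [h1, Finset.card_erase_of_mem hi, x.hdim]
    omega

/-- The inert restriction `g ∘ ν` of an injective necklace map, adding the
vertex `i ∈ V \ W` as a joint. -/
def inert (x : Idx p T (n + 1)) (i : ℕ) (hi : i ∈ x.V \ x.W) : Idx p T n where
  V := x.V
  W := insert i x.W
  hTW := x.hTW.trans (Finset.subset_insert _ _)
  hWV := Finset.insert_subset_iff.mpr ⟨(Finset.mem_sdiff.mp hi).1, x.hWV⟩
  hV := x.hV
  h0 := Finset.mem_insert_of_mem x.h0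
  hp := Finset.mem_insert_of_mem x.hp
  hdim := by
    have h1 : x.V \ insert i x.W = (x.V \ x.W).erase i := by
      ext a
      simp only [Finset.mem_erase, Finset.mem_sdiff, Finset.mem_insert]
      tauto
    rw [h1, Finset.card_erase_of_mem hi, x.hdim]
    omega

end Idx

/-- The boundary of a generator: `∂(g) = Σ_{j=1}^{n+1} (-1)^{j-1}
(g ∘ δ_{i_j} - g ∘ ν_{i_j, q - i_j})`, the sum running over the complement
`V \ W = {i_1 < i_2 < …}`. -/
noncomputable def bnd (k : Type*) [CommRing k] {p : ℕ} {T : Finset ℕ} {n : ℕ}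
    (x : Idx p T (n + 1)) : Idx p T n →₀ k :=
  ∑ i ∈ (x.V \ x.W).attach,
    ((-1 : k) ^ ((x.V \ x.W).filter (fun y => y < (i : ℕ))).card) •
      (Finsupp.single (x.face i.1 i.2) (1 : k) -
        Finsupp.single (x.inert i.1 i.2) (1 : k))

/-- The differential `∂ : dg(T)_{n+1} → dg(T)_n` of the dg complex of the
necklace `(T,p)`, where `dg(T)_m` is the free `k`-module on injective necklace
maps into `T` of dimension `m`. -/
noncomputable def Dmap (k : Type*) [CommRing k] (p : ℕ) (T : Finset ℕ) (n : ℕ) :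
    (Idx p T (n + 1) →₀ k) →ₗ[k] (Idx p T n →₀ k) :=
  Finsupp.lsum k fun x => LinearMap.toSpanSingleton k _ (bnd k x)

/-- The subcomplex `C_• ⊆ dg(Δⁿ)_•` generated by all injective necklace maps
into `Δⁿ` other than `id_{Δⁿ}` (index `V = [n]`, `W = {0,n}`, degree `n-1`) and
`δ_j` (index `V = [n] \ {j}`, `W = {0,n}`, degree `n-2`). -/
def Csub (k : Type*) [CommRing k] (n j : ℕ) (m : ℕ) :
    Submodule k (Idx n ({0, n} : Finset ℕ) m →₀ k) :=
  Finsupp.supported k k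
    {x : Idx n ({0, n} : Finset ℕ) m |
      ¬(x.V = Finset.range (n + 1) ∧ x.W = ({0, n} : Finset ℕ)) ∧
      ¬(x.V = (Finset.range (n + 1)).erase j ∧ x.W = ({0, n} : Finset ℕ))}

/-!
The only generators outside `C` are `id = id_{Δⁿ}`, of dimension `n - 1`, and `δ_j`, of
dimension `n - 2`. A boundary never involves `id`, since faces lose a vertex and inert maps gain
a joint; and `δ_j` occurs only in `∂ id`, with coefficient `(-1)^(j-1)`, since putting the
missing vertex `j` back into `δ_j` gives `id`. Hence `C` is a subcomplex, and evaluation at `id`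
and at `δ_j` identifies the quotient with `k = k`. The retraction onto `C` subtracts
`x(id) • id` in dimension `n - 1` and `(-1)^(j-1) x(δ_j) • ∂ id` in dimension `n - 2`; it is a
chain map because `∂ ∂ = 0`: faces and inert maps commute with one another, while removing
`i` then `i'` carries the opposite sign to removing `i'` then `i`.
-/

theorem Finset.sum_sum_erase_eq_zero_of_antisymm {α M : Type*} [DecidableEq α]
    [AddCommGroup M] (s : Finset α) (f : α → α → M)
    (hf : ∀ a ∈ s, ∀ b ∈ s, a ≠ b → f b a = -f a b) :
    ∑ a ∈ s, ∑ b ∈ s.erase a, f a b = 0 := by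
  rw [Finset.sum_sigma']
  refine Finset.sum_involution (fun q _ => ⟨q.2, q.1⟩) ?_ ?_ ?_ fun _ _ => rfl
  · rintro ⟨a, b⟩ hq
    simp only [Finset.mem_sigma, Finset.mem_erase] at hq
    rw [hf a hq.1 b hq.2.2 (Ne.symm hq.2.1), add_neg_cancel]
  · rintro ⟨a, b⟩ hq _ h
    simp only [Finset.mem_sigma, Finset.mem_erase] at hq
    exact hq.2.1 (congrArg Sigma.fst h)
  · rintro ⟨a, b⟩ hq
    simp only [Finset.mem_sigma, Finset.mem_erase] at hq ⊢
    exact ⟨hq.2.2, Ne.symm hq.2.1, hq.1⟩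

theorem Finsupp.supported_compl_singleton {α M R : Type*} [Semiring R] [AddCommMonoid M]
    [Module R M] (a : α) :
    Finsupp.supported M R ({a}ᶜ : Set α) = LinearMap.ker (Finsupp.lapply a) := by
  ext x
  simp [Finsupp.mem_supported', LinearMap.mem_ker]

theorem Finsupp.lapply_surjective {α R : Type*} [Semiring R] (a : α) :
    Function.Surjective (Finsupp.lapply (R := R) (M := R) a) :=
  fun c => ⟨Finsupp.single a c, Finsupp.single_eq_same⟩

noncomputable def Finsupp.quotEquivOfEqKerLapply {α R : Type*} [CommRing R]
    {S : Submodule R (α →₀ R)} (a : α) (h : S = LinearMap.ker (Finsupp.lapply a)) :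
    ((α →₀ R) ⧸ S) ≃ₗ[R] R :=
  (Submodule.quotEquivOfEq _ _ h).trans
    ((Finsupp.lapply a).quotKerEquivOfSurjective (Finsupp.lapply_surjective a))

theorem Finsupp.quotEquivOfEqKerLapply_mk {α R : Type*} [CommRing R]
    {S : Submodule R (α →₀ R)} (a : α) (h : S = LinearMap.ker (Finsupp.lapply a))
    (x : α →₀ R) : Finsupp.quotEquivOfEqKerLapply a h (Submodule.Quotient.mk x) = x a :=
  rfl

theorem neg_one_pow_mul_self {M : Type*} [Monoid M] [HasDistribNeg M] (j : ℕ) :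
    (-1 : M) ^ j * (-1) ^ j = 1 := by
  rw [← pow_add]
  exact Even.neg_one_pow ⟨j, rfl⟩

section Sign

open Finset

variable {k : Type*} [CommRing k]

theorem card_filter_lt_erase_of_lt (S : Finset ℕ) {a b : ℕ} (ha : a ∈ S) (hab : a < b) :
    ((S.erase a).filter (· < b)).card + 1 = (S.filter (· < b)).card := by
  rw [filter_erase, card_erase_add_one (by simp [ha, hab])]

theorem card_filter_lt_erase_of_le (S : Finset ℕ) {a b : ℕ} (hab : b ≤ a) :
    ((S.erase a).filter (· < b)).card = (S.filter (· < b)).card := by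
  rw [filter_erase, erase_eq_of_notMem (by simp [hab])]

theorem neg_one_pow_card_filter_lt_erase_antisymm (S : Finset ℕ) {i i' : ℕ} (hi : i ∈ S)
    (hi' : i' ∈ S) (hne : i ≠ i') :
    (-1 : k) ^ (S.filter (· < i')).card * (-1) ^ ((S.erase i').filter (· < i)).card =
      -((-1 : k) ^ (S.filter (· < i)).card * (-1) ^ ((S.erase i).filter (· < i')).card) := by
  wlog hlt : i < i' generalizing i i'
  · rw [this hi' hi hne.symm (by omega), neg_neg]
  have hexp : (S.filter (· < i')).card + ((S.erase i').filter (· < i)).card =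
      (S.filter (· < i)).card + ((S.erase i).filter (· < i')).card + 1 := by
    have := card_filter_lt_erase_of_lt S hi hlt
    rw [card_filter_lt_erase_of_le S hlt.le]
    omega
  rw [← pow_add, ← pow_add, hexp, pow_succ, mul_neg_one]

end Sign

namespace Idx

variable {p : ℕ} {T : Finset ℕ} {n : ℕ}

theorem ext {x y : Idx p T n} (hV : x.V = y.V) (hW : x.W = y.W) : x = y := by
  cases x; cases y; cases hV; cases hW; rfl

theorem face_sdiff (x : Idx p T (n + 1)) (i : ℕ) (hi : i ∈ x.V \ x.W) :
    (x.face i hi).V \ (x.face i hi).W = (x.V \ x.W).erase i :=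
  Finset.erase_sdiff_comm _ _ _

theorem inert_sdiff (x : Idx p T (n + 1)) (i : ℕ) (hi : i ∈ x.V \ x.W) :
    (x.inert i hi).V \ (x.inert i hi).W = (x.V \ x.W).erase i :=
  Finset.sdiff_insert _ _ _

theorem face_injective (x : Idx p T (n + 1)) {i i' : ℕ} (hi : i ∈ x.V \ x.W)
    (hi' : i' ∈ x.V \ x.W) (h : x.face i hi = x.face i' hi') : i = i' := by
  have hV : x.V.erase i = x.V.erase i' := congrArg Idx.V h
  by_contra hne
  have : i ∈ x.V.erase i' := Finset.mem_erase.mpr ⟨hne, (Finset.mem_sdiff.mp hi).1⟩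
  rw [← hV] at this
  exact Finset.notMem_erase i x.V this

theorem face_ne_inert (x : Idx p T (n + 1)) {i i' : ℕ} (hi : i ∈ x.V \ x.W)
    (hi' : i' ∈ x.V \ x.W) : x.face i hi ≠ x.inert i' hi' := fun h => by
  have hV : x.V.erase i = x.V := congrArg Idx.V h
  exact Finset.notMem_erase i x.V (by rw [hV]; exact (Finset.mem_sdiff.mp hi).1)

theorem face_V_ne_range (x : Idx p T (n + 1)) (i : ℕ) (hi : i ∈ x.V \ x.W) :
    (x.face i hi).V ≠ Finset.range (p + 1) := fun h => by
  have hV : x.V.erase i = Finset.range (p + 1) := h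
  exact Finset.notMem_erase i x.V (by rw [hV]; exact x.hV (Finset.mem_sdiff.mp hi).1)

theorem inert_W_ne (x : Idx p T (n + 1)) (i : ℕ) (hi : i ∈ x.V \ x.W) :
    (x.inert i hi).W ≠ T := fun h =>
  (Finset.mem_sdiff.mp hi).2 (x.hTW (h ▸ Finset.mem_insert_self i x.W))

section Commute

variable (x : Idx p T (n + 2)) {i i' : ℕ} (hi : i ∈ x.V \ x.W) (hi' : i' ∈ x.V \ x.W)

theorem face_face (h : i' ∈ (x.face i hi).V \ (x.face i hi).W)
    (h' : i ∈ (x.face i' hi').V \ (x.face i' hi').W) :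
    (x.face i hi).face i' h = (x.face i' hi').face i h' :=
  ext Finset.erase_right_comm rfl

theorem inert_inert (h : i' ∈ (x.inert i hi).V \ (x.inert i hi).W)
    (h' : i ∈ (x.inert i' hi').V \ (x.inert i' hi').W) :
    (x.inert i hi).inert i' h = (x.inert i' hi').inert i h' :=
  ext rfl (Finset.insert_comm _ _ _)

theorem inert_face (h : i' ∈ (x.inert i hi).V \ (x.inert i hi).W)
    (h' : i ∈ (x.face i' hi').V \ (x.face i' hi').W) :
    (x.inert i hi).face i' h = (x.face i' hi').inert i h' :=
  ext rfl rfl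

end Commute

end Idx

section Boundary

variable (k : Type*) [CommRing k] {p : ℕ} {T : Finset ℕ} {n : ℕ}

theorem Dmap_single (x : Idx p T (n + 1)) (c : k) :
    Dmap k p T n (Finsupp.single x c) = c • bnd k x := by
  rw [Dmap, Finsupp.lsum_single, LinearMap.toSpanSingleton_apply]

variable {k}

theorem bnd_mem_supported {x : Idx p T (n + 1)} {S : Set (Idx p T n)}
    (hface : ∀ i hi, x.face i hi ∈ S) (hinert : ∀ i hi, x.inert i hi ∈ S) :
    bnd k x ∈ Finsupp.supported k k S :=
  Submodule.sum_mem _ fun i _ => Submodule.smul_mem _ _ <| Submodule.sub_mem _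
    (Finsupp.single_mem_supported k _ (hface i.1 i.2))
    (Finsupp.single_mem_supported k _ (hinert i.1 i.2))

theorem bnd_apply_face (x : Idx p T (n + 1)) (i : ℕ) (hi : i ∈ x.V \ x.W) :
    bnd k x (x.face i hi) = (-1) ^ ((x.V \ x.W).filter (· < i)).card := by
  classical
  rw [bnd, Finsupp.finsetSum_apply, Finset.sum_eq_single_of_mem ⟨i, hi⟩ (Finset.mem_attach _ _)]
  · simp [x.face_ne_inert hi hi]
  · rintro ⟨i', hi'⟩ _ hne
    have hface : x.face i' hi' ≠ x.face i hi := fun h =>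
      hne (Subtype.ext (x.face_injective hi' hi h))
    simp [hface, x.face_ne_inert hi hi']

variable (k) in
noncomputable def bndTerm (x : Idx p T (n + 1)) (i : ℕ) : Idx p T n →₀ k :=
  if h : i ∈ x.V \ x.W then
    Finsupp.single (x.face i h) 1 - Finsupp.single (x.inert i h) 1
  else 0

theorem bnd_eq_sum_bndTerm (x : Idx p T (n + 1)) :
    bnd k x =
      ∑ i ∈ x.V \ x.W, (-1 : k) ^ ((x.V \ x.W).filter (· < i)).card • bndTerm k x i := by
  rw [bnd, ← Finset.sum_attach (x.V \ x.W)]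
  exact Finset.sum_congr rfl fun i _ => by rw [bndTerm, dif_pos i.2]

theorem Dmap_bndTerm (x : Idx p T (n + 2)) {i : ℕ} (hi : i ∈ x.V \ x.W) :
    Dmap k p T n (bndTerm k x i) = bnd k (x.face i hi) - bnd k (x.inert i hi) := by
  rw [bndTerm, dif_pos hi, map_sub, Dmap_single, Dmap_single, one_smul, one_smul]

variable (k) in
noncomputable def bndTerm₂ (x : Idx p T (n + 2)) (i i' : ℕ) : Idx p T n →₀ k :=
  if h : i ∈ x.V \ x.W then bndTerm k (x.face i h) i' - bndTerm k (x.inert i h) i' else 0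

theorem bndTerm₂_comm (x : Idx p T (n + 2)) {i i' : ℕ} (hi : i ∈ x.V \ x.W)
    (hi' : i' ∈ x.V \ x.W) (hne : i ≠ i') : bndTerm₂ k x i i' = bndTerm₂ k x i' i := by
  have hf : i' ∈ (x.face i hi).V \ (x.face i hi).W := by
    rw [Idx.face_sdiff]; exact Finset.mem_erase.mpr ⟨hne.symm, hi'⟩
  have hn : i' ∈ (x.inert i hi).V \ (x.inert i hi).W := by
    rw [Idx.inert_sdiff]; exact Finset.mem_erase.mpr ⟨hne.symm, hi'⟩
  have hf' : i ∈ (x.face i' hi').V \ (x.face i' hi').W := by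
    rw [Idx.face_sdiff]; exact Finset.mem_erase.mpr ⟨hne, hi⟩
  have hn' : i ∈ (x.inert i' hi').V \ (x.inert i' hi').W := by
    rw [Idx.inert_sdiff]; exact Finset.mem_erase.mpr ⟨hne, hi⟩
  rw [bndTerm₂, bndTerm₂, dif_pos hi, dif_pos hi', bndTerm, bndTerm, bndTerm, bndTerm,
    dif_pos hf, dif_pos hn, dif_pos hf', dif_pos hn', x.face_face hi hi' hf hf',
    x.inert_inert hi hi' hn hn', x.inert_face hi hi' hn hf', x.inert_face hi' hi hn' hf]
  abel

theorem Dmap_bnd (x : Idx p T (n + 2)) : Dmap k p T n (bnd k x) = 0 := by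
  have expand : ∀ i ∈ x.V \ x.W,
      Dmap k p T n ((-1 : k) ^ ((x.V \ x.W).filter (· < i)).card • bndTerm k x i) =
        ∑ i' ∈ (x.V \ x.W).erase i, ((-1 : k) ^ ((x.V \ x.W).filter (· < i)).card *
          (-1) ^ (((x.V \ x.W).erase i).filter (· < i')).card) • bndTerm₂ k x i i' := by
    intro i hi
    rw [map_smul, Dmap_bndTerm x hi, bnd_eq_sum_bndTerm, bnd_eq_sum_bndTerm, x.face_sdiff,
      x.inert_sdiff, ← Finset.sum_sub_distrib, Finset.smul_sum]
    refine Finset.sum_congr rfl fun i' _ => ?_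
    simp only [bndTerm₂, dif_pos hi, mul_smul, smul_sub]
  rw [bnd_eq_sum_bndTerm, map_sum, Finset.sum_congr rfl expand]
  refine Finset.sum_sum_erase_eq_zero_of_antisymm _ _ fun i hi i' hi' hne => ?_
  rw [bndTerm₂_comm x hi' hi hne.symm, neg_one_pow_card_filter_lt_erase_antisymm _ hi hi' hne,
    neg_smul]

end Boundary

section Simplex

variable {n j m : ℕ}

theorem range_succ_sdiff_zero_self (n : ℕ) :
    Finset.range (n + 1) \ ({0, n} : Finset ℕ) = Finset.Ioo 0 n := by
  ext a
  simp only [Finset.mem_sdiff, Finset.mem_range, Finset.mem_insert, Finset.mem_singleton,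
    Finset.mem_Ioo]
  omega

theorem card_filter_lt_range_succ_sdiff_zero_self (hj : j ≤ n) :
    ((Finset.range (n + 1) \ ({0, n} : Finset ℕ)).filter (· < j)).card = j - 1 := by
  have : (Finset.Ioo 0 n).filter (· < j) = Finset.Ioo 0 j := by
    ext a
    simp only [Finset.mem_filter, Finset.mem_Ioo]
    omega
  rw [range_succ_sdiff_zero_self, this, Nat.card_Ioo, Nat.sub_zero]

namespace Idx

def simplexId (h : m + 1 = n) : Idx n {0, n} m where
  V := Finset.range (n + 1)
  W := {0, n}
  hTW := subset_rfl
  hWV := by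
    intro a
    simp only [Finset.mem_insert, Finset.mem_singleton, Finset.mem_range]
    omega
  hV := subset_rfl
  h0 := by simp
  hp := by simp
  hdim := by rw [range_succ_sdiff_zero_self, Nat.card_Ioo]; omega

theorem mem_simplexId_sdiff (h : m + 1 = n) {i : ℕ} :
    i ∈ (simplexId h).V \ (simplexId h).W ↔ 0 < i ∧ i < n := by
  rw [← Finset.mem_Ioo, ← range_succ_sdiff_zero_self]
  rfl

def simplexDelta (h0 : 0 < j) (hj : j < n) (h : m + 2 = n) : Idx n {0, n} m :=
  (simplexId (m := m + 1) h).face j ((mem_simplexId_sdiff h).mpr ⟨h0, hj⟩)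

/-- `g = id_{Δⁿ}` (and below, `g = δ_j`), stated without fixing the dimension of `g`. -/
def IsId (g : Idx n {0, n} m) : Prop :=
  g.V = Finset.range (n + 1) ∧ g.W = {0, n}

def IsDelta (j : ℕ) (g : Idx n {0, n} m) : Prop :=
  g.V = (Finset.range (n + 1)).erase j ∧ g.W = {0, n}

theorem IsId.dim_eq {g : Idx n {0, n} m} (hn : 0 < n) (hg : g.IsId) : m + 1 = n := by
  have h := g.hdim
  rw [hg.1, hg.2, range_succ_sdiff_zero_self, Nat.card_Ioo] at h
  omega

theorem IsDelta.dim_eq {g : Idx n {0, n} m} (h0 : 0 < j) (hj : j < n) (hg : g.IsDelta j) :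
    m + 2 = n := by
  have h := g.hdim
  rw [hg.1, hg.2, Finset.erase_sdiff_comm, range_succ_sdiff_zero_self,
    Finset.card_erase_of_mem (Finset.mem_Ioo.mpr ⟨h0, hj⟩), Nat.card_Ioo] at h
  omega

theorem isId_iff (h : m + 1 = n) {g : Idx n {0, n} m} : g.IsId ↔ g = simplexId h :=
  ⟨fun hg => ext hg.1 hg.2, fun hg => hg ▸ ⟨rfl, rfl⟩⟩

theorem isDelta_iff (h0 : 0 < j) (hj : j < n) (h : m + 2 = n) {g : Idx n {0, n} m} :
    g.IsDelta j ↔ g = simplexDelta h0 hj h :=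
  ⟨fun hg => ext hg.1 hg.2, fun hg => hg ▸ ⟨rfl, rfl⟩⟩

theorem not_isId_face (g : Idx n {0, n} (m + 1)) (i : ℕ) (hi : i ∈ g.V \ g.W) :
    ¬ (g.face i hi).IsId := fun h => g.face_V_ne_range i hi h.1

theorem not_isId_inert (g : Idx n {0, n} (m + 1)) (i : ℕ) (hi : i ∈ g.V \ g.W) :
    ¬ (g.inert i hi).IsId := fun h => g.inert_W_ne i hi h.2

theorem not_isDelta_inert (g : Idx n {0, n} (m + 1)) (i : ℕ) (hi : i ∈ g.V \ g.W) :
    ¬ (g.inert i hi).IsDelta j := fun h => g.inert_W_ne i hi h.2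

theorem IsDelta.isId_of_face (hj : j < n) {g : Idx n {0, n} (m + 1)} {i : ℕ}
    {hi : i ∈ g.V \ g.W} (h : (g.face i hi).IsDelta j) : g.IsId := by
  have hV : g.V.erase i = (Finset.range (n + 1)).erase j := h.1
  have hiV := (Finset.mem_sdiff.mp hi).1
  have hij : i = j := by
    by_contra hne
    have : i ∈ (Finset.range (n + 1)).erase j := Finset.mem_erase.mpr ⟨hne, g.hV hiV⟩
    rw [← hV] at this
    exact Finset.notMem_erase i g.V this
  subst hij
  refine ⟨?_, h.2⟩
  rw [← Finset.insert_erase hiV, hV, Finset.insert_erase (by simp; omega)]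

end Idx

end Simplex

section Complex

open Idx

variable {k : Type*} [CommRing k] {n j m : ℕ}

theorem Csub_eq :
    Csub k n j m = Finsupp.supported k k {g | ¬ IsId g ∧ ¬ IsDelta j g} := rfl

theorem bnd_mem_Csub (hj : j < n) {g : Idx n {0, n} (m + 1)} (hg : ¬ g.IsId) :
    bnd k g ∈ Csub k n j m :=
  bnd_mem_supported
    (fun i hi => ⟨not_isId_face g i hi, fun h => hg (IsDelta.isId_of_face hj h)⟩)
    (fun i hi => ⟨not_isId_inert g i hi, not_isDelta_inert g i hi⟩)

theorem Dmap_mem_Csub (hj : j < n) {x : Idx n {0, n} (m + 1) →₀ k}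
    (hx : x ∈ Csub k n j (m + 1)) : Dmap k n {0, n} m x ∈ Csub k n j m := by
  rw [Dmap, Finsupp.lsum_apply]
  refine Submodule.finsuppSum_mem _ _ _ _ fun g hg => ?_
  rw [LinearMap.toSpanSingleton_apply]
  exact Submodule.smul_mem _ _
    (bnd_mem_Csub hj ((Finsupp.mem_supported k x).mp hx (Finsupp.mem_support_iff.mpr hg)).1)

theorem Csub_eq_top (h0 : 0 < j) (hj : j < n) (h1 : m + 1 ≠ n) (h2 : m + 2 ≠ n) :
    Csub k n j m = ⊤ := by
  rw [Csub_eq, ← Finsupp.supported_univ]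
  congr
  exact Set.eq_univ_of_forall fun g =>
    ⟨fun hg => h1 (hg.dim_eq (by omega)), fun hg => h2 (hg.dim_eq h0 hj)⟩

theorem Csub_eq_ker_simplexId (h0 : 0 < j) (hj : j < n) (h : m + 1 = n) :
    Csub k n j m = LinearMap.ker (Finsupp.lapply (simplexId h)) := by
  rw [Csub_eq, ← Finsupp.supported_compl_singleton]
  congr
  ext g
  simp only [Set.mem_singleton_iff, isId_iff h]
  exact ⟨fun hg => hg.1, fun hg => ⟨hg, fun hd => by have := hd.dim_eq h0 hj; omega⟩⟩

theorem Csub_eq_ker_simplexDelta (h0 : 0 < j) (hj : j < n) (h : m + 2 = n) :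
    Csub k n j m = LinearMap.ker (Finsupp.lapply (simplexDelta h0 hj h)) := by
  rw [Csub_eq, ← Finsupp.supported_compl_singleton]
  congr
  ext g
  simp only [Set.mem_singleton_iff, isDelta_iff h0 hj h]
  exact ⟨fun hg => hg.2, fun hg => ⟨fun hi => by have := hi.dim_eq (by omega); omega, hg⟩⟩

theorem bnd_simplexId_apply_simplexDelta (h0 : 0 < j) (hj : j < n) (h : m + 2 = n) :
    bnd k (simplexId (m := m + 1) h) (simplexDelta h0 hj h) = (-1) ^ (j - 1) := by
  rw [simplexDelta, bnd_apply_face]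
  exact congrArg _ (card_filter_lt_range_succ_sdiff_zero_self hj.le)

theorem bnd_apply_simplexDelta_of_ne (h0 : 0 < j) (hj : j < n) (h : m + 2 = n)
    {g : Idx n {0, n} (m + 1)} (hg : g ≠ simplexId h) : bnd k g (simplexDelta h0 hj h) = 0 := by
  have hC := bnd_mem_Csub (k := k) hj (mt (isId_iff h).mp hg)
  rwa [Csub_eq_ker_simplexDelta h0 hj h] at hC

theorem Dmap_apply_simplexDelta (h0 : 0 < j) (hj : j < n) (h : m + 2 = n)
    (x : Idx n {0, n} (m + 1) →₀ k) :
    Dmap k n {0, n} m x (simplexDelta h0 hj h) = (-1) ^ (j - 1) * x (simplexId h) := by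
  classical
  induction x using Finsupp.induction_linear with
  | zero => simp
  | add x y hx hy => rw [map_add, Finsupp.add_apply, Finsupp.add_apply, hx, hy, mul_add]
  | single g c =>
    rw [Dmap_single, Finsupp.smul_apply, smul_eq_mul, Finsupp.single_apply]
    by_cases hg : g = simplexId h
    · rw [if_pos hg, hg, bnd_simplexId_apply_simplexDelta, mul_comm]
    · rw [if_neg hg, bnd_apply_simplexDelta_of_ne h0 hj h hg, mul_zero, mul_zero]

variable (k) in
noncomputable def csubRetraction (h0 : 0 < j) (hj : j < n) (m : ℕ) :
    Module.End k (Idx n {0, n} m →₀ k) :=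
  if h : m + 1 = n then
    LinearMap.id - Finsupp.lsingle (simplexId h) ∘ₗ Finsupp.lapply (simplexId h)
  else if h' : m + 2 = n then
    LinearMap.id - LinearMap.toSpanSingleton k _ ((-1 : k) ^ (j - 1) •
      bnd k (simplexId (m := m + 1) h')) ∘ₗ Finsupp.lapply (simplexDelta h0 hj h')
  else LinearMap.id

section Retraction

variable (h0 : 0 < j) (hj : j < n)

theorem csubRetraction_apply_of_add_one_eq (h : m + 1 = n) (x : Idx n {0, n} m →₀ k) :
    csubRetraction k h0 hj m x = x - Finsupp.single (simplexId h) (x (simplexId h)) := by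
  rw [csubRetraction, dif_pos h]
  rfl

theorem csubRetraction_apply_of_add_two_eq (h : m + 2 = n) (x : Idx n {0, n} m →₀ k) :
    csubRetraction k h0 hj m x =
      x - ((-1) ^ (j - 1) * x (simplexDelta h0 hj h)) • bnd k (simplexId (m := m + 1) h) := by
  rw [csubRetraction, dif_neg (by omega), dif_pos h, LinearMap.sub_apply,
    LinearMap.comp_apply, LinearMap.toSpanSingleton_apply, Finsupp.lapply_apply, smul_smul,
    mul_comm]
  rfl

theorem csubRetraction_apply_of_ne (h1 : m + 1 ≠ n) (h2 : m + 2 ≠ n)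
    (x : Idx n {0, n} m →₀ k) : csubRetraction k h0 hj m x = x := by
  rw [csubRetraction, dif_neg h1, dif_neg h2]
  rfl

theorem csubRetraction_mem_Csub (x : Idx n {0, n} m →₀ k) :
    csubRetraction k h0 hj m x ∈ Csub k n j m := by
  by_cases h1 : m + 1 = n
  · rw [Csub_eq_ker_simplexId h0 hj h1, LinearMap.mem_ker, Finsupp.lapply_apply,
      csubRetraction_apply_of_add_one_eq h0 hj h1, Finsupp.sub_apply, Finsupp.single_eq_same,
      sub_self]
  by_cases h2 : m + 2 = n
  · rw [Csub_eq_ker_simplexDelta h0 hj h2, LinearMap.mem_ker, Finsupp.lapply_apply,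
      csubRetraction_apply_of_add_two_eq h0 hj h2, Finsupp.sub_apply, Finsupp.smul_apply,
      bnd_simplexId_apply_simplexDelta, smul_eq_mul, mul_right_comm, neg_one_pow_mul_self,
      one_mul, sub_self]
  rw [Csub_eq_top h0 hj h1 h2]
  exact Submodule.mem_top

theorem csubRetraction_apply_of_mem_Csub {x : Idx n {0, n} m →₀ k} (hx : x ∈ Csub k n j m) :
    csubRetraction k h0 hj m x = x := by
  by_cases h1 : m + 1 = n
  · rw [Csub_eq_ker_simplexId h0 hj h1, LinearMap.mem_ker, Finsupp.lapply_apply] at hx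
    rw [csubRetraction_apply_of_add_one_eq h0 hj h1, hx, Finsupp.single_zero, sub_zero]
  by_cases h2 : m + 2 = n
  · rw [Csub_eq_ker_simplexDelta h0 hj h2, LinearMap.mem_ker, Finsupp.lapply_apply] at hx
    rw [csubRetraction_apply_of_add_two_eq h0 hj h2, hx, mul_zero, zero_smul, sub_zero]
  exact csubRetraction_apply_of_ne h0 hj h1 h2 x

theorem csubRetraction_Dmap (x : Idx n {0, n} (m + 1) →₀ k) :
    csubRetraction k h0 hj m (Dmap k n {0, n} m x) =
      Dmap k n {0, n} m (csubRetraction k h0 hj (m + 1) x) := by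
  by_cases h1 : m + 1 = n
  · have hx : x ∈ Csub k n j (m + 1) := by rw [Csub_eq_top h0 hj (by omega) (by omega)]; trivial
    have hD := Dmap_mem_Csub hj hx
    rw [Csub_eq_ker_simplexId h0 hj h1, LinearMap.mem_ker, Finsupp.lapply_apply] at hD
    rw [csubRetraction_apply_of_add_one_eq h0 hj h1, hD, Finsupp.single_zero, sub_zero,
      csubRetraction_apply_of_ne h0 hj (by omega) (by omega)]
  by_cases h2 : m + 2 = n
  · rw [csubRetraction_apply_of_add_two_eq h0 hj h2,
      csubRetraction_apply_of_add_one_eq h0 hj h2,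
      Dmap_apply_simplexDelta, ← mul_assoc, neg_one_pow_mul_self, one_mul, map_sub,
      Dmap_single]
  by_cases h3 : m + 3 = n
  · rw [csubRetraction_apply_of_ne h0 hj h1 h2, csubRetraction_apply_of_add_two_eq h0 hj h3,
      map_sub, map_smul, Dmap_bnd, smul_zero, sub_zero]
  rw [csubRetraction_apply_of_ne h0 hj h1 h2, csubRetraction_apply_of_ne h0 hj h2 h3]

end Retraction

end Complex

/-- For `0 < j < n`, `C_•` is a subcomplex of `dg(Δⁿ)_•` and the quotient
`dg(Δⁿ)_•/C_•` is isomorphic to the complex `k = k` concentrated in degrees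
`n-1` and `n-2` with identity differential; in particular the quotient is
acyclic and degreewise free, and the inclusion `C_• ↪ dg(Δⁿ)_•` is a split
monomorphism of chain complexes. -/
theorem dg_simplex_quotient_split
    (k : Type*) [CommRing k] (n j : ℕ) (h0 : 0 < j) (hj : j < n) :
    -- C is a subcomplex
    (∀ (m : ℕ) (x : Idx n ({0, n} : Finset ℕ) (m + 1) →₀ k),
        x ∈ Csub k n j (m + 1) → Dmap k n {0, n} m x ∈ Csub k n j m) ∧
    -- the quotient vanishes outside degrees n-1 and n-2
    (∀ m : ℕ, m ≠ n - 1 → m ≠ n - 2 →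
        ∀ x : Idx n ({0, n} : Finset ℕ) m →₀ k, x ∈ Csub k n j m) ∧
    -- in degrees n-1 and n-2 the quotient is k, with identity differential
    (∀ m : ℕ, n = m + 2 →
        ∃ (e₁ : ((Idx n ({0, n} : Finset ℕ) (m + 1) →₀ k) ⧸ Csub k n j (m + 1)) ≃ₗ[k] k)
          (e₂ : ((Idx n ({0, n} : Finset ℕ) m →₀ k) ⧸ Csub k n j m) ≃ₗ[k] k),
          ∀ x : Idx n ({0, n} : Finset ℕ) (m + 1) →₀ k,
            e₂ (Submodule.Quotient.mk (Dmap k n {0, n} m x)) =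
              e₁ (Submodule.Quotient.mk x)) ∧
    -- the inclusion of C splits as a map of chain complexes
    (∃ π : ∀ m : ℕ,
        (Idx n ({0, n} : Finset ℕ) m →₀ k) →ₗ[k] (Idx n ({0, n} : Finset ℕ) m →₀ k),
        (∀ m x, π m x ∈ Csub k n j m) ∧
        (∀ m x, x ∈ Csub k n j m → π m x = x) ∧
        (∀ m x, π m (Dmap k n {0, n} m x) = Dmap k n {0, n} m (π (m + 1) x))) := by
  refine ⟨fun m x hx => Dmap_mem_Csub hj hx, fun m h1 h2 x => ?_, fun m hm => ?_,
    csubRetraction k h0 hj, fun _ => csubRetraction_mem_Csub h0 hj,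
    fun _ _ => csubRetraction_apply_of_mem_Csub h0 hj, fun _ => csubRetraction_Dmap h0 hj⟩
  · rw [Csub_eq_top h0 hj (by omega) (by omega)]
    trivial
  · refine ⟨(Finsupp.quotEquivOfEqKerLapply _ (Csub_eq_ker_simplexId h0 hj hm.symm)).trans
        (LinearEquiv.smulOfUnit ((-1) ^ (j - 1))),
      Finsupp.quotEquivOfEqKerLapply _ (Csub_eq_ker_simplexDelta h0 hj hm.symm), fun x => ?_⟩
    rw [LinearEquiv.trans_apply, Finsupp.quotEquivOfEqKerLapply_mk,
      Finsupp.quotEquivOfEqKerLapply_mk, Dmap_apply_simplexDelta h0 hj hm.symm]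
    show _ = ((-1) ^ (j - 1) : kˣ) • x _
    simp [Units.smul_def]
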